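/- arXiv:2205.10914 — 2 statements merged into one kernel-verified Lean document; each statement's English description precedes it below -/
import Mathlib

section
/- There exists a labeled graph and an index i such that the labeling κ^{(i+1)} (by multisets of label sequences of walks of exactly length i+1) does not refine κ^{(i)}; specifically there are nodes u, v with κ^{(1)}(u) ≠ κ^{(1)}(v) but κ^{(2)}(u) = κ^{(2)}(v). -/
open Finset

/-- A walk represented as a vertex function with consecutive vertices adjacent. -/
def IsWalk {V : Type*} (G : SimpleGraph V) {i : ℕ} (f : Fin (i+1) → V) : Prop :=
  ∀ j : Fin i, G.Adj (f j.castSucc) (f j.succ)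

/-- Walks of length `i` in `G`. -/
abbrev WalkLen {V : Type*} (G : SimpleGraph V) (i : ℕ) : Type _ :=
  { f : Fin (i+1) → V // IsWalk G f }

/-- Walks of length `i` in `G` starting at `v`. -/
abbrev WalkFrom {V : Type*} (G : SimpleGraph V) (v : V) (i : ℕ) : Type _ :=
  { f : Fin (i+1) → V // f 0 = v ∧ IsWalk G f }

noncomputable instance {V : Type*} (G : SimpleGraph V) [Fintype V] (i : ℕ) :
    Fintype (WalkLen G i) := Fintype.ofFinite _

noncomputable instance {V : Type*} (G : SimpleGraph V) [Fintype V] (v : V) (i : ℕ) :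
    Fintype (WalkFrom G v i) := Fintype.ofFinite _

/-- Label sequence of a walk. -/
def lseq {V S : Type*} (lab : V → S) {i : ℕ} (f : Fin (i+1) → V) : List S :=
  List.ofFn (lab ∘ f)

/-- κ^{(i)}(v): multiset of label sequences of walks of length exactly i from v. -/
noncomputable def kappa {V S : Type*} (G : SimpleGraph V) [Fintype V] (lab : V → S)
    (i : ℕ) (v : V) : Multiset (List S) :=
  (Finset.univ : Finset (WalkFrom G v i)).val.map fun w => lseq lab w.1

/-- κ₊^{(ℓ)}(v): multiset of label sequences of walks of length at most ℓ from v. -/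
noncomputable def kappaPlus {V S : Type*} (G : SimpleGraph V) [Fintype V] (lab : V → S)
    (ℓ : ℕ) (v : V) : Multiset (List S) :=
  ∑ i ∈ Finset.range (ℓ+1), kappa G lab i v

/-- The type of Weisfeiler-Leman labels after i iterations. -/
def WLL (S : Type*) : ℕ → Type _
  | 0 => S
  | (i+1) => WLL S i × Multiset (WLL S i)

/-- Weisfeiler-Leman refinement. -/
def wl {V S : Type*} (G : SimpleGraph V) [Fintype V] [DecidableRel G.Adj] (lab : V → S) :
    (i : ℕ) → V → WLL S i
  | 0, v => lab v
  | (i+1), v => (wl G lab i v, (G.neighborFinset v).val.map (wl G lab i))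

/-- Morgan's extended connectivity. -/
def ec {V : Type*} (G : SimpleGraph V) [Fintype V] [DecidableRel G.Adj] : ℕ → V → ℕ
  | 0, _ => 1
  | (i+1), v => ∑ u ∈ G.neighborFinset v, ec G i u

/-- Vertices of the direct product graph: pairs with matching labels. -/
abbrev ProdVert {V W S : Type*} (labG : V → S) (labH : W → S) : Type _ :=
  { p : V × W // labG p.1 = labH p.2 }

/-- The direct product graph of two labeled graphs. -/
def prodGraph {V W S : Type*} (G : SimpleGraph V) (H : SimpleGraph W)
    (labG : V → S) (labH : W → S) : SimpleGraph (ProdVert labG labH) where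
  Adj p q := G.Adj p.1.1 q.1.1 ∧ H.Adj p.1.2 q.1.2
  symm := ⟨fun _ _ h => ⟨h.1.symm, h.2.symm⟩⟩
  loopless := ⟨fun _ h => G.loopless.irrefl _ h.1⟩

open Classical in
/-- k_i(u,v): pairs of length-i walks from u and v with matching label sequences. -/
noncomputable def kwalk {V W S : Type*} (G : SimpleGraph V) (H : SimpleGraph W)
    [Fintype V] [Fintype W] (labG : V → S) (labH : W → S) (i : ℕ) (u : V) (v : W) : ℕ :=
  ∑ w : WalkFrom G u i, ∑ w' : WalkFrom H v i,
    ∏ j : Fin (i+1), if labG (w.1 j) = labH (w'.1 j) then 1 else 0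



instance isWalkDecidable {V : Type*} (G : SimpleGraph V) [DecidableRel G.Adj] (i : ℕ)
    (f : Fin (i+1) → V) : Decidable (IsWalk G f) := by
  unfold IsWalk; infer_instance

/-- The path graph 0 - 1 - 2 on `Fin 3`. -/
def myG : SimpleGraph (Fin 3) :=
  SimpleGraph.fromRel (fun a b => (a = 0 ∧ b = 1) ∨ (a = 1 ∧ b = 2))

instance : DecidableRel myG.Adj := fun a b => by
  unfold myG SimpleGraph.fromRel; simp only; infer_instance

lemma my_card_congr {α : Type*} (i1 i2 : Fintype α) :
    @Fintype.card α i1 = @Fintype.card α i2 := by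
  congr 1; exact Subsingleton.elim _ _

lemma kappa_unit {V : Type*} (G : SimpleGraph V) [Fintype V] (i : ℕ) (v : V) :
    kappa G (fun _ => ()) i v =
      Multiset.replicate (Fintype.card (WalkFrom G v i)) (List.replicate (i+1) ()) := by
  unfold kappa
  have h : ∀ w : WalkFrom G v i, lseq (fun _ : V => ()) w.1 = List.replicate (i+1) () := by
    intro w
    simp [lseq, Function.comp, List.replicate_succ]
  rw [Multiset.map_congr rfl (fun w _ => h w), Multiset.map_const']
  simp [Finset.card_univ]

/-- κ^{(i+1)} need not refine κ^{(i)}: there are a labeled graph and nodes u, v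
with κ^{(1)}(u) ≠ κ^{(1)}(v) but κ^{(2)}(u) = κ^{(2)}(v). -/
theorem stmt_3 :
    ∃ (V : Type) (_ : Fintype V) (G : SimpleGraph V) (S : Type) (lab : V → S) (u v : V),
      kappa G lab 1 u ≠ kappa G lab 1 v ∧ kappa G lab 2 u = kappa G lab 2 v := by
  refine ⟨Fin 3, inferInstance, myG, Unit, fun _ => (), 1, 0, ?_, ?_⟩
  · rw [kappa_unit, kappa_unit]
    have h1 : Fintype.card (WalkFrom myG 1 1) = 2 := by
      rw [my_card_congr _ (Subtype.fintype _)]; decide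
    have h0 : Fintype.card (WalkFrom myG 0 1) = 1 := by
      rw [my_card_congr _ (Subtype.fintype _)]; decide
    rw [h1, h0]
    intro h
    have := congrArg Multiset.card h
    simp at this
  · rw [kappa_unit, kappa_unit]
    have h1 : Fintype.card (WalkFrom myG 1 2) = 2 := by
      rw [my_card_congr _ (Subtype.fintype _)]; decide
    have h0 : Fintype.card (WalkFrom myG 0 2) = 2 := by
      rw [my_card_congr _ (Subtype.fintype _)]; decide
    rw [h1, h0]
end

section
/- For every i ≥ 1 and every labeled graph, the walk labeling κ^{(i)} refines the extended-connectivity labeling ec^{(i)}: if κ^{(i)}(u) = κ^{(i)}(v) then ec^{(i)}(u) = ec^{(i)}(v). -/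
open Finset

/-! Splitting off the first step, a walk of length `i + 1` from `v` is a neighbour `u` of `v`
followed by a walk of length `i` from `u`; so the number of such walks satisfies Morgan's
recursion and `ec G i v` counts the walks of length `i` from `v`. Since `κ⁽ⁱ⁾(v)` has one entry
per such walk, its cardinality is `ec G i v`. -/

section Walks

variable {V : Type*}

theorem IsWalk.cons {G : SimpleGraph V} {i : ℕ} {v : V} {f : Fin (i + 1) → V}
    (hf : IsWalk G f) (hv : G.Adj v (f 0)) : IsWalk G (Fin.cons v f : Fin (i + 2) → V) :=
  Fin.cases hv fun j => by simpa [← Fin.succ_castSucc] using hf j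

theorem IsWalk.tail {G : SimpleGraph V} {i : ℕ} {f : Fin (i + 2) → V} (hf : IsWalk G f) :
    IsWalk G (Fin.tail f) :=
  fun j => hf j.succ

def walkFromSuccEquiv (G : SimpleGraph V) (v : V) (i : ℕ) :
    WalkFrom G v (i + 1) ≃ Σ u : G.neighborSet v, WalkFrom G u i where
  toFun w := ⟨⟨w.1 1, by simpa [w.2.1] using w.2.2 0⟩, ⟨Fin.tail w.1, rfl, w.2.2.tail⟩⟩
  invFun x := ⟨Fin.cons v x.2.1, rfl, x.2.2.2.cons (by rw [x.2.2.1]; exact x.1.2)⟩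
  left_inv w := Subtype.ext <| by
    rw [← Fin.cons_self_tail w.1, w.2.1]
  right_inv x := Sigma.subtype_ext (Subtype.ext x.2.2.1) rfl

theorem card_walkFrom_zero (G : SimpleGraph V) [Fintype V] (v : V) :
    Fintype.card (WalkFrom G v 0) = 1 :=
  Fintype.card_eq_one_iff.2 ⟨⟨fun _ => v, rfl, Fin.elim0⟩, fun w =>
    Subtype.ext <| funext fun j => by rw [Fin.fin_one_eq_zero j, w.2.1]⟩

theorem ec_eq_card_walkFrom (G : SimpleGraph V) [Fintype V] [DecidableRel G.Adj]
    (i : ℕ) (v : V) : ec G i v = Fintype.card (WalkFrom G v i) := by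
  induction i generalizing v with
  | zero => rw [ec, card_walkFrom_zero]
  | succ i ih =>
    rw [ec, G.neighborFinset_def,
      Finset.sum_subtype (p := (· ∈ G.neighborSet v)) _ fun _ => Set.mem_toFinset,
      Fintype.card_congr (walkFromSuccEquiv G v i), Fintype.card_sigma]
    exact Fintype.sum_congr _ _ fun u => ih u

theorem card_kappa (G : SimpleGraph V) [Fintype V] {S : Type*} (lab : V → S) (i : ℕ) (v : V) :
    Multiset.card (kappa G lab i v) = Fintype.card (WalkFrom G v i) := by
  rw [kappa, Multiset.card_map, Finset.card_val, Finset.card_univ]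

end Walks

theorem stmt_4_general {V S : Type*} [Fintype V] (G : SimpleGraph V) [DecidableRel G.Adj]
    (lab : V → S) (i : ℕ) (u v : V)
    (h : kappa G lab i u = kappa G lab i v) :
    ec G i u = ec G i v := by
  rw [ec_eq_card_walkFrom, ec_eq_card_walkFrom, ← card_kappa G lab, ← card_kappa G lab, h]

/-- κ^{(i)} refines ec^{(i)} for i ≥ 1. -/
theorem stmt_4 {V S : Type*} [Fintype V] (G : SimpleGraph V) [DecidableRel G.Adj]
    (lab : V → S) (i : ℕ) (hi : 1 ≤ i) (u v : V)
    (h : kappa G lab i u = kappa G lab i v) :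
    ec G i u = ec G i v :=
  stmt_4_general G lab i u v h
end
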